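/- arXiv:2305.10922 — 2 statements merged into one kernel-verified Lean document; each statement's English description precedes it below -/
import Mathlib

section
/- Let ab and a'b' be segments in ℝ², and let a''b'' be the translate of a'b' whose midpoint coincides with the midpoint of ab. Then d_H(ab, a''b'') ≤ d_H(ab, a'b'). -/
noncomputable abbrev E2 : Type := EuclideanSpace ℝ (Fin 2)

/-!
Let `r` be the Hausdorff distance of `[a, b]` and `[a', b']`. The endpoints `a, b` lie within `r`
of points `p, q` of `[a', b']`, and `q - p = l • (b' - a')` with `|l| ≤ 1`, so
`‖(b - a) - l • (b' - a')‖ ≤ 2 r`; this bound only involves the direction vectors, so it survives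
the translation. Once the midpoints agree at `m`, it lets us match `m + (θ / 2) • (b - a)` with
`m + (θ * l / 2) • (b' - a')` at distance `≤ |θ| r ≤ r`, and symmetrically.
-/

open Metric

section Module

variable {V : Type*} [AddCommGroup V] [Module ℝ V]

theorem mem_segment_iff_exists_eq_midpoint_add {a b x : V} :
    x ∈ segment ℝ a b ↔ ∃ θ : ℝ, |θ| ≤ 1 ∧ x = midpoint ℝ a b + (θ / 2) • (b - a) := by
  rw [midpoint_eq_smul_add, invOf_eq_inv]
  constructor
  · rintro ⟨s, t, hs, ht, hst, rfl⟩
    obtain rfl : s = 1 - t := by linarith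
    exact ⟨t - (1 - t), abs_le.2 ⟨by linarith, by linarith⟩, by module⟩
  · rintro ⟨θ, hθ, rfl⟩
    rw [abs_le] at hθ
    exact ⟨(1 - θ) / 2, (1 + θ) / 2, by linarith, by linarith, by ring, by module⟩

theorem exists_sub_eq_smul_of_mem_segment {a b p q : V} (hp : p ∈ segment ℝ a b)
    (hq : q ∈ segment ℝ a b) : ∃ c : ℝ, |c| ≤ 1 ∧ q - p = c • (b - a) := by
  obtain ⟨α, hα, rfl⟩ := mem_segment_iff_exists_eq_midpoint_add.1 hp
  obtain ⟨β, hβ, rfl⟩ := mem_segment_iff_exists_eq_midpoint_add.1 hq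
  rw [abs_le] at hα hβ
  exact ⟨(β - α) / 2, abs_le.2 ⟨by linarith, by linarith⟩, by module⟩

end Module

theorem Metric.exists_dist_le_hausdorffDist_of_mem {α : Type*} [PseudoMetricSpace α]
    {s t : Set α} {x : α} (hx : x ∈ s) (hs : Bornology.IsBounded s) (ht : IsCompact t)
    (ht₀ : t.Nonempty) : ∃ y ∈ t, dist x y ≤ hausdorffDist s t := by
  obtain ⟨y, hy, hxy⟩ := ht.exists_infDist_eq_dist ht₀ x
  refine ⟨y, hy, hxy ▸ infDist_le_hausdorffDist_of_mem hx ?_⟩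
  exact hausdorffEDist_ne_top_of_nonempty_of_bounded ⟨x, hx⟩ ht₀ hs ht.isBounded

section NormedSpace

variable {E : Type*} [NormedAddCommGroup E] [NormedSpace ℝ E]

theorem isCompact_segment (a b : E) : IsCompact (segment ℝ a b) := by
  rw [segment_eq_image_lineMap]
  exact isCompact_Icc.image AffineMap.lineMap_continuous

theorem exists_norm_sub_smul_le_two_mul_hausdorffDist (a b c d : E) :
    ∃ l : ℝ, |l| ≤ 1 ∧
      ‖(b - a) - l • (d - c)‖ ≤ 2 * hausdorffDist (segment ℝ a b) (segment ℝ c d) := by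
  have hbdd := (isCompact_segment a b).isBounded
  have hne : (segment ℝ c d).Nonempty := ⟨c, left_mem_segment ℝ c d⟩
  obtain ⟨p, hp, hap⟩ := exists_dist_le_hausdorffDist_of_mem (left_mem_segment ℝ a b) hbdd
    (isCompact_segment c d) hne
  obtain ⟨q, hq, hbq⟩ := exists_dist_le_hausdorffDist_of_mem (right_mem_segment ℝ a b) hbdd
    (isCompact_segment c d) hne
  obtain ⟨l, hl, hqp⟩ := exists_sub_eq_smul_of_mem_segment hp hq
  refine ⟨l, hl, ?_⟩
  rw [dist_eq_norm] at hap hbq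
  calc ‖(b - a) - l • (d - c)‖ = ‖(b - q) - (a - p)‖ := by rw [← hqp]; congr 1; abel
    _ ≤ ‖b - q‖ + ‖a - p‖ := norm_sub_le _ _
    _ ≤ _ := by linarith

theorem infDist_segment_le_of_midpoint_eq {a b c d x : E}
    (hm : midpoint ℝ a b = midpoint ℝ c d) {l r : ℝ} (hl : |l| ≤ 1)
    (h : ‖(b - a) - l • (d - c)‖ ≤ 2 * r) (hx : x ∈ segment ℝ a b) :
    infDist x (segment ℝ c d) ≤ r := by
  obtain ⟨θ, hθ, rfl⟩ := mem_segment_iff_exists_eq_midpoint_add.1 hx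
  have hy : midpoint ℝ c d + (θ * l / 2) • (d - c) ∈ segment ℝ c d :=
    mem_segment_iff_exists_eq_midpoint_add.2
      ⟨θ * l, by rw [abs_mul]; exact mul_le_one₀ hθ (abs_nonneg l) hl, rfl⟩
  refine (infDist_le_dist_of_mem hy).trans ?_
  have hdiff : midpoint ℝ a b + (θ / 2) • (b - a) - (midpoint ℝ c d + (θ * l / 2) • (d - c))
      = (θ / 2) • ((b - a) - l • (d - c)) := by
    rw [hm]; module
  rw [dist_eq_norm, hdiff, norm_smul, Real.norm_eq_abs, abs_div, abs_two]
  nlinarith [norm_nonneg ((b - a) - l • (d - c)), abs_nonneg θ]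

theorem hausdorffDist_segment_le_of_midpoint_eq {a b c d : E}
    (hm : midpoint ℝ a b = midpoint ℝ c d) {r : ℝ} (hr : 0 ≤ r)
    (hab : ∃ l : ℝ, |l| ≤ 1 ∧ ‖(b - a) - l • (d - c)‖ ≤ 2 * r)
    (hcd : ∃ l : ℝ, |l| ≤ 1 ∧ ‖(d - c) - l • (b - a)‖ ≤ 2 * r) :
    hausdorffDist (segment ℝ a b) (segment ℝ c d) ≤ r := by
  obtain ⟨l, hl, h⟩ := hab
  obtain ⟨l', hl', h'⟩ := hcd
  exact hausdorffDist_le_of_infDist hr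
    (fun _ hx ↦ infDist_segment_le_of_midpoint_eq hm hl h hx)
    (fun _ hx ↦ infDist_segment_le_of_midpoint_eq hm.symm hl' h' hx)

end NormedSpace

/-- Translating a'b' so that its midpoint coincides with that of ab does not increase
the Hausdorff distance to ab. -/
theorem hausdorff_dist_recenter_le (a b a' b' : E2)
    (v : E2) (hv : midpoint ℝ a' b' + v = midpoint ℝ a b) :
    Metric.hausdorffDist (segment ℝ a b) (segment ℝ (a' + v) (b' + v)) ≤
      Metric.hausdorffDist (segment ℝ a b) (segment ℝ a' b') := by
  have hm : midpoint ℝ a b = midpoint ℝ (a' + v) (b' + v) := by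
    rw [← hv, midpoint_eq_smul_add, midpoint_eq_smul_add, invOf_eq_inv]
    module
  have hdir : b' + v - (a' + v) = b' - a' := add_sub_add_right_eq_sub b' a' v
  refine hausdorffDist_segment_le_of_midpoint_eq hm hausdorffDist_nonneg ?_ ?_ <;> rw [hdir]
  · exact exists_norm_sub_smul_le_two_mul_hausdorffDist a b a' b'
  · rw [hausdorffDist_comm]
    exact exists_norm_sub_smul_le_two_mul_hausdorffDist a' b' a b
end

section
/- Let s₁ be the segment from (−1,0) to (1,0) and s₂ the segment from (0,−1) to (0,1). For every segment s in ℝ², d_H(s,s₁)² + d_H(s,s₂)² ≥ 1. -/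
open Metric Module
open scoped RealInnerProductSpace

section

variable {E : Type*} [NormedAddCommGroup E] [InnerProductSpace ℝ E]

theorem exists_norm_eq_one_inner_eq_zero [FiniteDimensional ℝ E] (hE : 2 ≤ finrank ℝ E) (v : E) :
    ∃ n : E, ‖n‖ = 1 ∧ ⟪n, v⟫ = 0 := by
  have hK : (ℝ ∙ v)ᗮ ≠ ⊥ := by
    rw [← Submodule.one_le_finrank_iff]
    have := (ℝ ∙ v).finrank_add_finrank_orthogonal
    have : finrank ℝ (ℝ ∙ v) ≤ 1 := by simpa using finrank_span_le_card ({v} : Set E)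
    omega
  obtain ⟨w, hwK, hw⟩ := Submodule.exists_mem_ne_zero_of_ne_bot hK
  refine ⟨‖w‖⁻¹ • w, norm_smul_inv_norm hw, ?_⟩
  rw [real_inner_smul_left, real_inner_comm,
    Submodule.mem_orthogonal_singleton_iff_inner_right.1 hwK, mul_zero]

theorem abs_inner_sub_le_infDist {n p : E} {s : Set E} {c : ℝ} (hn : ‖n‖ ≤ 1) (hs : s.Nonempty)
    (hsc : ∀ y ∈ s, ⟪n, y⟫ = c) : |⟪n, p⟫ - c| ≤ infDist p s := by
  refine (le_infDist hs).2 fun y hy => ?_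
  calc |⟪n, p⟫ - c| = |⟪n, p - y⟫| := by rw [inner_sub_right, hsc y hy]
    _ ≤ ‖n‖ * ‖p - y‖ := abs_real_inner_le_norm n _
    _ ≤ dist p y := by rw [dist_eq_norm]; exact mul_le_of_le_one_left (norm_nonneg _) hn

theorem inner_eq_of_mem_segment {n a b y : E} (hab : ⟪n, b - a⟫ = 0) (hy : y ∈ segment ℝ a b) :
    ⟪n, y⟫ = ⟪n, a⟫ := by
  have hb : ⟪n, b⟫ = ⟪n, a⟫ := by rwa [inner_sub_right, sub_eq_zero] at hab
  exact (convex_hyperplane (innerₛₗ ℝ n).isLinear _).segment_subset rfl hb hy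

theorem isBounded_segment (a b : E) : Bornology.IsBounded (segment ℝ a b) := by
  rw [← convexHull_pair]
  exact isBounded_convexHull.2 (Set.toFinite _).isBounded

theorem infDist_le_hausdorffDist_segment {a b p q x : E} (hx : x ∈ segment ℝ p q) :
    infDist x (segment ℝ a b) ≤ hausdorffDist (segment ℝ a b) (segment ℝ p q) := by
  rw [hausdorffDist_comm]
  exact infDist_le_hausdorffDist_of_mem hx <| hausdorffEDist_ne_top_of_nonempty_of_bounded
    ⟨p, left_mem_segment ℝ p q⟩ ⟨a, left_mem_segment ℝ a b⟩ (isBounded_segment p q)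
    (isBounded_segment a b)

theorem abs_inner_sub_le_two_mul_hausdorffDist_segment {n a b : E} (hn : ‖n‖ ≤ 1)
    (hab : ⟪n, b - a⟫ = 0) (p q : E) :
    |⟪n, q - p⟫| ≤ 2 * hausdorffDist (segment ℝ a b) (segment ℝ p q) := by
  have hclose : ∀ x ∈ segment ℝ p q,
      |⟪n, x⟫ - ⟪n, a⟫| ≤ hausdorffDist (segment ℝ a b) (segment ℝ p q) := fun x hx =>
    (abs_inner_sub_le_infDist hn ⟨a, left_mem_segment ℝ a b⟩
      fun y hy => inner_eq_of_mem_segment hab hy).trans (infDist_le_hausdorffDist_segment hx)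
  have hp := hclose p (left_mem_segment ℝ p q)
  have hq := hclose q (right_mem_segment ℝ p q)
  rw [inner_sub_right]
  calc |⟪n, q⟫ - ⟪n, p⟫| = |(⟪n, q⟫ - ⟪n, a⟫) - (⟪n, p⟫ - ⟪n, a⟫)| := by ring_nf
    _ ≤ _ := (abs_sub _ _).trans (by linarith)

end

/-- For every segment s, the Fréchet variance of the two perpendicular unit-radius
segments at s is at least 1. -/
theorem frechet_variance_ge_one (a b : E2) :
    Metric.hausdorffDist (segment ℝ a b) (segment ℝ (!₂[(-1 : ℝ), 0] : E2) (!₂[(1 : ℝ), 0] : E2)) ^ 2 +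
      Metric.hausdorffDist (segment ℝ a b) (segment ℝ (!₂[(0 : ℝ), -1] : E2) (!₂[(0 : ℝ), 1] : E2)) ^ 2
      ≥ 1 := by
  obtain ⟨n, hn, hab⟩ := exists_norm_eq_one_inner_eq_zero (by simp) (b - a)
  have h₁ := abs_inner_sub_le_two_mul_hausdorffDist_segment hn.le hab
    (!₂[(-1 : ℝ), 0] : E2) (!₂[(1 : ℝ), 0] : E2)
  have h₂ := abs_inner_sub_le_two_mul_hausdorffDist_segment hn.le hab
    (!₂[(0 : ℝ), -1] : E2) (!₂[(0 : ℝ), 1] : E2)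
  norm_num [PiLp.inner_apply, Fin.sum_univ_two, abs_mul] at h₁ h₂
  calc 1 = |n 0| ^ 2 + |n 1| ^ 2 := by
        simpa [hn, Fin.sum_univ_two] using EuclideanSpace.norm_sq_eq n
    _ ≤ _ := by gcongr
end
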